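/- Let (X,d) be a metric space and let u, u_1, u_2, ... be fuzzy sets in F_USCG(X). Then the following statements are equivalent: (i) u_n Γ-converges to u; (ii) [u_n]_α Kuratowski converges to [u]_α for Lebesgue-almost every α ∈ (0,1); (iii) [u_n]_α Kuratowski converges to [u]_α for all α ∈ (0,1) \ P(u); (iv) [u_n]_α Kuratowski converges to [u]_α for all α in some dense subset P of (0,1) \ P(u); (v) [u_n]_α Kuratowski converges to [u]_α for all α in some countable dense subset P of (0,1) \ P(u). -/

import Mathlib

open Set Filter Metric Topology MeasureTheory

/-- The α-cut of a fuzzy set `u : X → ℝ`: for `α ≠ 0` it is `{x | u x ≥ α}`,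
and for `α = 0` it is the closure of `{x | u x > 0}`. -/
noncomputable def cut {X : Type*} [MetricSpace X] (u : X → ℝ) (α : ℝ) : Set X :=
  if α = 0 then closure {x | 0 < u x} else {x | α ≤ u x}

/-- `u` is a normal upper semicontinuous fuzzy set: it takes values in `[0,1]` and
all α-cuts (`α ∈ [0,1]`) are nonempty and closed. -/
def FUSC {X : Type*} [MetricSpace X] (u : X → ℝ) : Prop :=
  (∀ x, u x ∈ Set.Icc (0:ℝ) 1) ∧
    ∀ α ∈ Set.Icc (0:ℝ) 1, (cut u α).Nonempty ∧ IsClosed (cut u α)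

/-- `F_USCG(X)`: fuzzy sets in `F_USC(X)` with compact positive α-cuts. -/
def FUSCG {X : Type*} [MetricSpace X] (u : X → ℝ) : Prop :=
  FUSC u ∧ ∀ α ∈ Set.Ioc (0:ℝ) 1, IsCompact (cut u α)

/-- `F_USCB(X)`: fuzzy sets in `F_USC(X)` with compact support. -/
def FUSCB {X : Type*} [MetricSpace X] (u : X → ℝ) : Prop :=
  FUSC u ∧ IsCompact (cut u 0)

/-- Kuratowski lower limit of a sequence of sets. -/
def kurLiminf {Y : Type*} [MetricSpace Y] (C : ℕ → Set Y) : Set Y :=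
  {y | ∃ f : ℕ → Y, (∀ n, f n ∈ C n) ∧ Tendsto f atTop (𝓝 y)}

/-- Kuratowski upper limit of a sequence of sets. -/
def kurLimsup {Y : Type*} [MetricSpace Y] (C : ℕ → Set Y) : Set Y :=
  {y | ∃ φ : ℕ → ℕ, StrictMono φ ∧
        ∃ f : ℕ → Y, (∀ n, f n ∈ C (φ n)) ∧ Tendsto f atTop (𝓝 y)}

/-- Kuratowski convergence of a sequence of sets to a set. -/
def KurConv {Y : Type*} [MetricSpace Y] (C : ℕ → Set Y) (D : Set Y) : Prop :=
  kurLiminf C = D ∧ kurLimsup C = D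

/-- The endograph of `u`: `{(x,t) ∈ X × [0,1] : u x ≥ t}`. -/
def endo {X : Type*} [MetricSpace X] (u : X → ℝ) : Set (X × ℝ) :=
  {p | p.2 ∈ Set.Icc (0:ℝ) 1 ∧ p.2 ≤ u p.1}

/-- The sendograph of `u`: `end u ∩ ([u]₀ × [0,1])`. -/
noncomputable def sendo {X : Type*} [MetricSpace X] (u : X → ℝ) : Set (X × ℝ) :=
  endo u ∩ (cut u 0) ×ˢ (Set.Icc (0:ℝ) 1)

/-- Γ-convergence: Kuratowski convergence of endographs. -/
def GammaConv {X : Type*} [MetricSpace X] (un : ℕ → X → ℝ) (u : X → ℝ) : Prop :=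
  KurConv (fun n => endo (un n)) (endo u)

/-- The endograph metric. -/
noncomputable def Hend {X : Type*} [MetricSpace X] (u v : X → ℝ) : ℝ :=
  hausdorffDist (endo u) (endo v)

/-- The sendograph metric. -/
noncomputable def Hsend {X : Type*} [MetricSpace X] (u v : X → ℝ) : ℝ :=
  hausdorffDist (sendo u) (sendo v)

/-- The set of platform points of `u`:
`α ∈ (0,1)` with `closure {u > α}` a proper subset of `[u]_α`. -/
def Pset {X : Type*} [MetricSpace X] (u : X → ℝ) : Set ℝ :=
  {α | α ∈ Set.Ioo (0:ℝ) 1 ∧ closure {x | α < u x} ⊂ cut u α}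

/-- `P₀(u)`: the set of `α ∈ (0,1)` such that `H([u]_β, [u]_α)` does not tend to `0`
as `β → α`. -/
def P0set {X : Type*} [MetricSpace X] (u : X → ℝ) : Set ℝ :=
  {α | α ∈ Set.Ioo (0:ℝ) 1 ∧
    ¬ Tendsto (fun β => hausdorffDist (cut u β) (cut u α)) (𝓝[≠] α) (𝓝 0)}


/-! The endograph is the union of the slices `[u]_α × {α}`, so Kuratowski convergence of
endographs can be read off level by level. Γ-convergence always puts the limsup of the levels
inside `[u]_α` and `closure {u > α}` inside their liminf; off `P(u)` these two sets coincide.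
Conversely, convergence of the levels on a dense set of heights suffices, since a point of an
endograph can be approximated by points at nearby good heights.

What makes the remaining conditions equivalent is that `P(u)` is countable. Take a countable
dense subset `c` of `{u > 0}` (a countable union of compact cuts). For `q ∈ c`,
`β ↦ infDist q [u]_β` is monotone on `(0,1)`, hence right-continuous off a countable set; where
all of these functions are right-continuous, `infDist q {u > α} ≤ infDist q [u]_α` on `c`, and
by density `[u]_α ⊆ closure {u > α}`. -/

open TopologicalSpace

section Kuratowski

variable {Y : Type*} [MetricSpace Y] {C : ℕ → Set Y} {D : Set Y}

lemma kurLiminf_subset_kurLimsup (C : ℕ → Set Y) : kurLiminf C ⊆ kurLimsup C :=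
  fun _ ⟨f, hf, hft⟩ => ⟨id, strictMono_id, f, hf, hft⟩

lemma kurConv_of_subset (hinf : D ⊆ kurLiminf C) (hsup : kurLimsup C ⊆ D) : KurConv C D :=
  ⟨(kurLiminf_subset_kurLimsup C).trans hsup |>.antisymm hinf,
    hsup.antisymm (hinf.trans (kurLiminf_subset_kurLimsup C))⟩

lemma mem_kurLiminf_of_forall_eventually {y : Y} (hC : ∀ n, (C n).Nonempty)
    (h : ∀ ε > (0:ℝ), ∀ᶠ n in atTop, ∃ z ∈ C n, dist z y < ε) : y ∈ kurLiminf C := by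
  have hinf : Tendsto (fun n => infDist y (C n)) atTop (𝓝 0) := by
    refine Metric.tendsto_nhds.2 fun ε hε => ?_
    filter_upwards [h ε hε] with n ⟨z, hz, hzy⟩
    rw [Real.dist_eq, sub_zero, abs_of_nonneg infDist_nonneg]
    exact (infDist_le_dist_of_mem hz).trans_lt (dist_comm y z ▸ hzy)
  have hnear : ∀ n : ℕ, ∃ z ∈ C n, dist y z < infDist y (C n) + 1 / ((n:ℝ) + 1) := fun n =>
    (infDist_lt_iff (hC n)).1 (lt_add_of_pos_right _ Nat.one_div_pos_of_nat)
  choose f hfC hfy using hnear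
  refine ⟨f, hfC, tendsto_iff_dist_tendsto_zero.2 (squeeze_zero (fun n => dist_nonneg)
    (fun n => (dist_comm (f n) y ▸ hfy n).le) ?_)⟩
  simpa using hinf.add tendsto_one_div_add_atTop_nhds_zero_nat

lemma mem_kurLimsup_of_eventually {y : Y} {φ : ℕ → ℕ} (hφ : StrictMono φ) {f : ℕ → Y}
    (hf : ∀ᶠ n in atTop, f n ∈ C (φ n)) (hfy : Tendsto f atTop (𝓝 y)) : y ∈ kurLimsup C := by
  obtain ⟨N, hN⟩ := eventually_atTop.1 hf
  exact ⟨fun n => φ (n + N), hφ.comp (strictMono_id.add_const N), fun n => f (n + N),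
    fun n => hN _ (Nat.le_add_left N n), hfy.comp (tendsto_add_atTop_nat N)⟩

end Kuratowski

section Cuts

variable {X : Type*} [MetricSpace X] {u : X → ℝ} {un : ℕ → X → ℝ} {α : ℝ}

lemma mem_cut (hα : α ≠ 0) {x : X} : x ∈ cut u α ↔ α ≤ u x := by
  rw [cut, if_neg hα]; rfl

lemma closure_setOf_lt_eq_cut (hu : FUSC u) (hα : α ∈ Ioo 0 1 \ Pset u) :
    closure {x | α < u x} = cut u α := by
  have hsub : closure {x | α < u x} ⊆ cut u α :=
    closure_minimal (fun x hx => (mem_cut hα.1.1.ne').2 (le_of_lt hx))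
      (hu.2 α (mem_Icc_of_Ioo hα.1)).2
  by_contra hne
  exact hα.2 ⟨hα.1, hsub.ssubset_of_ne hne⟩

lemma kurLimsup_cut_subset (h : kurLimsup (fun n => endo (un n)) ⊆ endo u)
    (hα : α ∈ Ioc 0 1) : kurLimsup (fun n => cut (un n) α) ⊆ cut u α := by
  rintro x ⟨φ, hφ, f, hf, hfx⟩
  have hmem : (x, α) ∈ endo u :=
    h ⟨φ, hφ, fun n => (f n, α), fun n => ⟨mem_Icc_of_Ioc hα, (mem_cut hα.1.ne').1 (hf n)⟩,
      hfx.prodMk_nhds tendsto_const_nhds⟩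
  exact (mem_cut hα.1.ne').2 hmem.2

lemma closure_setOf_lt_subset_kurLiminf_cut (hu : ∀ x, u x ∈ Icc 0 1)
    (hne : ∀ n, (cut (un n) α).Nonempty) (h : endo u ⊆ kurLiminf (fun n => endo (un n)))
    (hα : 0 < α) : closure {x | α < u x} ⊆ kurLiminf (fun n => cut (un n) α) := by
  intro x hx
  refine mem_kurLiminf_of_forall_eventually hne fun ε hε => ?_
  obtain ⟨y, hy, hxy⟩ := Metric.mem_closure_iff.1 hx (ε / 2) (half_pos hε)
  obtain ⟨g, hg, hgy⟩ := h (show (y, u y) ∈ endo u from ⟨hu y, le_rfl⟩)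
  filter_upwards [hgy.snd_nhds.eventually (eventually_gt_nhds hy),
    hgy.fst_nhds (Metric.ball_mem_nhds y (half_pos hε))] with n hn hdist
  refine ⟨(g n).1, (mem_cut hα.ne').2 (hn.le.trans (hg n).2), ?_⟩
  calc dist (g n).1 x ≤ dist (g n).1 y + dist y x := dist_triangle _ _ _
    _ < ε / 2 + ε / 2 := add_lt_add hdist (dist_comm x y ▸ hxy)
    _ = ε := add_halves ε

lemma kurConv_cut_of_gammaConv (hu : FUSC u) (hun : ∀ n, FUSC (un n)) (h : GammaConv un u)
    (hα : α ∈ Ioo 0 1 \ Pset u) : KurConv (fun n => cut (un n) α) (cut u α) := by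
  refine kurConv_of_subset ?_ (kurLimsup_cut_subset h.2.le (mem_Ioc_of_Ioo hα.1))
  rw [← closure_setOf_lt_eq_cut hu hα]
  exact closure_setOf_lt_subset_kurLiminf_cut hu.1
    (fun n => ((hun n).2 α (mem_Icc_of_Ioo hα.1)).1) h.1.ge hα.1.1

lemma exists_mem_Ioo_of_Ioo_subset_closure {P : Set ℝ} (hP : Ioo 0 1 ⊆ closure P) {c d : ℝ}
    (hc : 0 ≤ c) (hcd : c < d) (hd : d ≤ 1) : ∃ α ∈ P, α ∈ Ioo c d := by
  obtain ⟨β, hβ⟩ := nonempty_Ioo.2 hcd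
  obtain ⟨α, hα, hαP⟩ := mem_closure_iff.1 (hP (Ioo_subset_Ioo hc hd hβ)) _ isOpen_Ioo hβ
  exact ⟨α, hαP, hα⟩

lemma kurLimsup_endo_subset_of_kurConv_cut (hu : ∀ x, 0 ≤ u x)
    {P : Set ℝ} (hPI : P ⊆ Ioo 0 1) (hP : Ioo 0 1 ⊆ closure P)
    (hconv : ∀ α ∈ P, KurConv (fun n => cut (un n) α) (cut u α)) :
    kurLimsup (fun n => endo (un n)) ⊆ endo u := by
  rintro ⟨x, t⟩ ⟨φ, hφ, f, hf, hfx⟩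
  have ht : t ∈ Icc 0 1 := isClosed_Icc.mem_of_tendsto hfx.snd_nhds (.of_forall fun n => (hf n).1)
  refine ⟨ht, not_lt.1 fun hxt => ?_⟩
  obtain ⟨α, hαP, hxα, hαt⟩ := exists_mem_Ioo_of_Ioo_subset_closure hP (hu x) hxt ht.2
  have hα0 : α ≠ 0 := (hPI hαP).1.ne'
  have hx : x ∈ kurLimsup (fun n => cut (un n) α) := by
    refine mem_kurLimsup_of_eventually hφ ?_ hfx.fst_nhds
    filter_upwards [hfx.snd_nhds.eventually (eventually_gt_nhds hαt)] with n hn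
    exact (mem_cut hα0).2 (hn.le.trans (hf n).2)
  rw [(hconv α hαP).2, mem_cut hα0] at hx
  exact hx.not_gt hxα

lemma endo_subset_kurLiminf_of_kurConv_cut (hun : ∀ n x, 0 ≤ un n x)
    {P : Set ℝ} (hPI : P ⊆ Ioo 0 1) (hP : Ioo 0 1 ⊆ closure P)
    (hconv : ∀ α ∈ P, KurConv (fun n => cut (un n) α) (cut u α)) :
    endo u ⊆ kurLiminf (fun n => endo (un n)) := by
  rintro ⟨x, t⟩ ⟨ht, htx⟩
  rcases ht.1.eq_or_lt with rfl | ht0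
  · exact ⟨fun _ => (x, 0), fun n => ⟨ht, hun n x⟩, tendsto_const_nhds⟩
  refine mem_kurLiminf_of_forall_eventually (fun n => ⟨(x, 0), ⟨le_rfl, zero_le_one⟩, hun n x⟩)
    fun ε hε => ?_
  obtain ⟨α, hαP, hεα, hαt⟩ := exists_mem_Ioo_of_Ioo_subset_closure hP (le_max_right (t - ε) 0)
    (max_lt (sub_lt_self t hε) ht0) ht.2
  have hα := hPI hαP
  have hx : x ∈ kurLiminf (fun n => cut (un n) α) :=
    (hconv α hαP).1 ▸ (mem_cut hα.1.ne').2 (hαt.le.trans htx)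
  obtain ⟨g, hg, hgx⟩ := hx
  filter_upwards [hgx (Metric.ball_mem_nhds x hε)] with n hn
  refine ⟨(g n, α), ⟨mem_Icc_of_Ioo hα, (mem_cut hα.1.ne').1 (hg n)⟩, max_lt hn ?_⟩
  rw [Real.dist_eq, abs_sub_lt_iff]
  constructor <;> linarith [le_max_left (t - ε) 0]

lemma gammaConv_of_kurConv_cut (hu : ∀ x, 0 ≤ u x) (hun : ∀ n x, 0 ≤ un n x)
    {P : Set ℝ} (hPI : P ⊆ Ioo 0 1) (hP : Ioo 0 1 ⊆ closure P)
    (hconv : ∀ α ∈ P, KurConv (fun n => cut (un n) α) (cut u α)) :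
    GammaConv un u :=
  kurConv_of_subset (endo_subset_kurLiminf_of_kurConv_cut hun hPI hP hconv)
    (kurLimsup_endo_subset_of_kurConv_cut hu hPI hP hconv)

lemma closure_subset_of_infDist_le {A B c : Set X} (hA : A.Nonempty)
    (h : ∀ q ∈ c, infDist q A ≤ infDist q B) : B ∩ closure c ⊆ closure A := by
  rintro x ⟨hxB, hxc⟩
  have hle : infDist x A ≤ infDist x B :=
    closure_minimal h (isClosed_le (continuous_infDist_pt A) (continuous_infDist_pt B)) hxc
  rw [infDist_zero_of_mem hxB] at hle
  exact (mem_closure_iff_infDist_zero hA).2 (hle.antisymm infDist_nonneg)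

lemma isSeparable_setOf_pos (hu : FUSCG u) : IsSeparable {x | 0 < u x} := by
  refine (IsSeparable.iUnion fun k : ℕ => (hu.2 (1 / (k + 1)) ⟨Nat.one_div_pos_of_nat,
    Nat.one_div_le_one_div (Nat.zero_le k) |>.trans_eq (by simp)⟩).isSeparable).mono ?_
  intro x hx
  obtain ⟨k, hk⟩ := exists_nat_one_div_lt (show 0 < u x from hx)
  exact mem_iUnion.2 ⟨k, (mem_cut Nat.one_div_pos_of_nat.ne').2 hk.le⟩

lemma monotoneOn_infDist_cut (hu : FUSC u) (q : X) :
    MonotoneOn (fun β => infDist q (cut u β)) (Ioo 0 1) := fun _ ha b hb hab =>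
  infDist_le_infDist_of_subset (fun _ hx => (mem_cut ha.1.ne').2 <| hab.trans <|
    (mem_cut hb.1.ne').1 hx) (hu.2 b (mem_Icc_of_Ioo hb)).1

lemma infDist_setOf_lt_le_infDist_cut (hu : FUSC u) {q : X} (hα : α ∈ Ioo 0 1)
    (hq : ContinuousWithinAt (fun β => infDist q (cut u β)) (Ioi α) α) :
    infDist q {x | α < u x} ≤ infDist q (cut u α) := by
  refine ge_of_tendsto hq ?_
  filter_upwards [Ioo_mem_nhdsGT hα.2] with β hβ
  have hβ0 : 0 < β := hα.1.trans hβ.1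
  exact infDist_le_infDist_of_subset (fun x hx => hβ.1.trans_le ((mem_cut hβ0.ne').1 hx))
    (hu.2 β ⟨hβ0.le, hβ.2.le⟩).1

lemma Pset_countable (hu : FUSCG u) : (Pset u).Countable := by
  obtain ⟨c, hc, hpos⟩ := isSeparable_setOf_pos hu
  refine (hc.biUnion fun q _ =>
    (monotoneOn_infDist_cut hu.1 q).countable_not_continuousWithinAt_Ioi).mono ?_
  rintro α ⟨hα, -, hnot⟩
  simp only [mem_iUnion₂]
  by_contra! hcont
  have hright : ∀ q ∈ c, ContinuousWithinAt (fun β => infDist q (cut u β)) (Ioi α) α :=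
    fun q hq => (of_not_not fun h => hcont q hq ⟨hα, h⟩).mono_of_mem_nhdsWithin
      (inter_mem (mem_nhdsWithin_of_mem_nhds (isOpen_Ioo.mem_nhds hα)) self_mem_nhdsWithin)
  obtain ⟨y, hy⟩ := (hu.1.2 1 ⟨zero_le_one, le_rfl⟩).1
  have hne : {x | α < u x}.Nonempty := ⟨y, hα.2.trans_le ((mem_cut one_ne_zero).1 hy)⟩
  exact hnot fun x hx => closure_subset_of_infDist_le hne
    (fun q hq => infDist_setOf_lt_le_infDist_cut hu.1 hα (hright q hq))
    ⟨hx, hpos (hα.1.trans_le ((mem_cut hα.1.ne').1 hx))⟩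

end Cuts

section Density

variable {Z : Type*} [TopologicalSpace Z] [MeasurableSpace Z] {μ : Measure Z}
  [μ.IsOpenPosMeasure] {U N : Set Z}

lemma IsOpen.subset_closure_of_diff_null (hU : IsOpen U) (hN : μ N = 0) {P : Set Z}
    (hP : U \ N ⊆ closure P) : U ⊆ closure P :=
  ((μ.dense_of_ae (measure_eq_zero_iff_ae_notMem.1 hN)).open_subset_closure_inter hU).trans
    (closure_minimal hP isClosed_closure)

lemma IsOpen.exists_dense_subset_of_ae (hU : IsOpen U) (hN : μ N = 0) {p : Z → Prop}
    (h : ∀ᵐ z ∂μ, z ∈ U → p z) : ∃ P ⊆ U \ N, U \ N ⊆ closure P ∧ ∀ z ∈ P, p z := by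
  have hdense := μ.dense_of_ae (h.and (measure_eq_zero_iff_ae_notMem.1 hN))
  refine ⟨U ∩ {z | (z ∈ U → p z) ∧ z ∉ N}, fun z hz => ⟨hz.1, hz.2.2⟩,
    sdiff_subset.trans (hdense.open_subset_closure_inter hU), fun z hz => hz.2.1 hz.1⟩

end Density

theorem gamma_convergence_level_decomposition_tfae
    {X : Type*} [MetricSpace X] (u : X → ℝ) (un : ℕ → X → ℝ)
    (hu : FUSCG u) (hun : ∀ n, FUSCG (un n)) :
    List.TFAE
      [ GammaConv un u,
        ∀ᵐ α ∂(volume : Measure ℝ), α ∈ Set.Ioo (0:ℝ) 1 →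
          KurConv (fun n => cut (un n) α) (cut u α),
        ∀ α ∈ Set.Ioo (0:ℝ) 1 \ Pset u, KurConv (fun n => cut (un n) α) (cut u α),
        ∃ P : Set ℝ, P ⊆ Set.Ioo (0:ℝ) 1 \ Pset u ∧
          (Set.Ioo (0:ℝ) 1 \ Pset u) ⊆ closure P ∧
          ∀ α ∈ P, KurConv (fun n => cut (un n) α) (cut u α),
        ∃ P : Set ℝ, P.Countable ∧ P ⊆ Set.Ioo (0:ℝ) 1 \ Pset u ∧
          (Set.Ioo (0:ℝ) 1 \ Pset u) ⊆ closure P ∧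
          ∀ α ∈ P, KurConv (fun n => cut (un n) α) (cut u α) ] := by
  have hPnull : volume (Pset u) = 0 := (Pset_countable hu).measure_zero volume
  tfae_have 1 → 3 := fun h α hα => kurConv_cut_of_gammaConv hu.1 (fun n => (hun n).1) h hα
  tfae_have 3 → 2 := fun h => by
    filter_upwards [measure_eq_zero_iff_ae_notMem.1 hPnull] with α hαP hα using h α ⟨hα, hαP⟩
  tfae_have 2 → 4 := isOpen_Ioo.exists_dense_subset_of_ae hPnull
  tfae_have 4 → 5
  | ⟨P, hPs, hsP, hconv⟩ => by
    obtain ⟨Q, hQP, hQ, hPQ⟩ := (IsSeparable.of_separableSpace P).exists_countable_dense_subset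
    exact ⟨Q, hQ, hQP.trans hPs, hsP.trans (closure_minimal hPQ isClosed_closure),
      fun α hα => hconv α (hQP hα)⟩
  tfae_have 5 → 1
  | ⟨P, _, hPs, hsP, hconv⟩ =>
    gammaConv_of_kurConv_cut (fun x => (hu.1.1 x).1) (fun n x => ((hun n).1.1 x).1)
      (hPs.trans sdiff_subset) (isOpen_Ioo.subset_closure_of_diff_null hPnull hsP) hconv
  tfae_finish
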